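/- arXiv:2510.16447 — 5 statements merged into one kernel-verified Lean document; each statement's English description precedes it below -/
import Mathlib

section
/- For all real numbers a, b ∈ [-1, 1], one has -f(b)(a - b) ≥ F(a) - F(b) - 2(a - b)², where F(φ) = (1 - φ²)²/4 and f = -F', i.e. f(φ) = φ - φ³. -/
/-!
The Bregman remainder of the double well is an exact quartic in `a - b`:
`F a - F b - F' b * (a - b) = (a - b)^2 * ((a + b)^2 + 2 * b^2 - 2) / 4`.
On `[-1, 1]` the second factor is at most `1`, so the remainder is at most
`(a - b)^2`, which is stronger than the stabilization bound `2 * (a - b)^2`.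
-/

lemma doubleWell_bregman_eq (a b : ℝ) :
    (1 - a^2)^2 / 4 - (1 - b^2)^2 / 4 + (b - b^3) * (a - b)
      = (a - b)^2 * ((a + b)^2 + 2 * b^2 - 2) / 4 := by
  ring

lemma sq_add_add_two_mul_sq_le_six {a b : ℝ} (ha : a ∈ Set.Icc (-1 : ℝ) 1)
    (hb : b ∈ Set.Icc (-1 : ℝ) 1) : (a + b)^2 + 2 * b^2 ≤ 6 := by
  obtain ⟨ha₁, ha₂⟩ := ha
  obtain ⟨hb₁, hb₂⟩ := hb
  have hab : (a + b)^2 ≤ 2^2 := sq_le_sq' (by linarith) (by linarith)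
  have hb' : b^2 ≤ 1 := sq_le_one_iff_abs_le_one b |>.mpr (abs_le.mpr ⟨hb₁, hb₂⟩)
  linarith

lemma doubleWell_bregman_le {a b : ℝ} (ha : a ∈ Set.Icc (-1 : ℝ) 1)
    (hb : b ∈ Set.Icc (-1 : ℝ) 1) :
    (1 - a^2)^2 / 4 - (1 - b^2)^2 / 4 + (b - b^3) * (a - b) ≤ (a - b)^2 := by
  rw [doubleWell_bregman_eq]
  have hfactor : (a + b)^2 + 2 * b^2 - 2 ≤ 4 := by
    linarith [sq_add_add_two_mul_sq_le_six ha hb]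
  linarith [mul_le_mul_of_nonneg_left hfactor (sq_nonneg (a - b))]

theorem stmt_1 (F f : ℝ → ℝ) (hF : ∀ φ, F φ = (1 - φ^2)^2 / 4)
    (hf : ∀ φ, f φ = φ - φ^3) :
    ∀ a ∈ Set.Icc (-1 : ℝ) 1, ∀ b ∈ Set.Icc (-1 : ℝ) 1,
      -(f b) * (a - b) ≥ F a - F b - 2 * (a - b)^2 := by
  intro a ha b hb
  rw [hF, hF, hf]
  linarith [doubleWell_bregman_le ha hb, sq_nonneg (a - b)]
end

section
/- For all real numbers a, b ∈ [-1, 1], one has (1/4)[(a² - 1)² - (b² - 1)²] ≤ (((a+b)/2)³ - (a+b)/2)(a - b) + 2(a - b)². -/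
/-!
Writing `s = (a + b)/2` and `d = a - b`, one has `a² - b² = 2sd` and `a² + b² = 2s² + d²/2`, so the
difference of the two sides is exactly `(a - b)² (16 - (a² - b²)) / 8`. On `[-1, 1]` the factor
`16 - (a² - b²)` is positive.
-/

lemma midpoint_cubic_gap (a b : ℝ) :
    (((a + b)/2)^3 - (a + b)/2) * (a - b) + 2 * (a - b)^2
        - (1/4 : ℝ) * ((a^2 - 1)^2 - (b^2 - 1)^2)
      = (a - b)^2 * (16 - (a^2 - b^2)) / 8 := by
  ring

lemma double_well_sub_le_midpoint_of_sq_sub_sq_le {a b : ℝ} (h : a^2 - b^2 ≤ 16) :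
    (1/4 : ℝ) * ((a^2 - 1)^2 - (b^2 - 1)^2) ≤
      (((a + b)/2)^3 - (a + b)/2) * (a - b) + 2 * (a - b)^2 := by
  have hgap : 0 ≤ (a - b)^2 * (16 - (a^2 - b^2)) / 8 := by
    have : 0 ≤ 16 - (a^2 - b^2) := by linarith
    positivity
  linarith [midpoint_cubic_gap a b]

theorem stmt_2 : ∀ a ∈ Set.Icc (-1 : ℝ) 1, ∀ b ∈ Set.Icc (-1 : ℝ) 1,
    (1/4 : ℝ) * ((a^2 - 1)^2 - (b^2 - 1)^2) ≤
      (((a + b)/2)^3 - (a + b)/2) * (a - b) + 2 * (a - b)^2 := by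
  rintro a ⟨ha₁, ha₂⟩ b -
  have ha : a^2 ≤ 1 := sq_le_one_iff_abs_le_one a |>.mpr (abs_le.mpr ⟨ha₁, ha₂⟩)
  exact double_well_sub_le_midpoint_of_sq_sub_sq_le (by linarith [sq_nonneg b])
end

section
/- Let M : ℝ → ℝ satisfy M(s) ≥ 0 for all s, let τ > 0, S₁ ≥ 2, and let φⁿ, φⁿ⁺¹ : ι → ℝ be functions on a finite nonempty index set ι with ‖φⁿ‖_∞ ≤ 1. Suppose L : ι → ℝ is a function satisfying, at an index j where φⁿ⁺¹ attains its maximum, L(j) ≤ 0, and suppose the scheme equation holds pointwise: (1/τ + S₁·M(φⁿ(i)))·φⁿ⁺¹(i) - ε²·M(φⁿ(i))·L(i) = (1/τ)·φⁿ(i) + M(φⁿ(i))·(f(φⁿ(i)) + S₁·φⁿ(i)) for all i, where f(ξ) = ξ - ξ³ and ε > 0. Then φⁿ⁺¹(j) ≤ 1. -/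
-- κ - (ξ - ξ³ + κξ) = (1 - ξ)(κ - ξ - ξ²), and ξ + ξ² ≤ 2 ≤ κ on [-1, 1]; the map is odd.
theorem abs_sub_pow_three_add_mul_le {κ ξ : ℝ} (hκ : 2 ≤ κ) (hξ : |ξ| ≤ 1) :
    |ξ - ξ ^ 3 + κ * ξ| ≤ κ := by
  have bound : ∀ x : ℝ, |x| ≤ 1 → x - x ^ 3 + κ * x ≤ κ := fun x hx => by
    obtain ⟨hx₁, hx₂⟩ := abs_le.mp hx
    have : 0 ≤ (1 - x) * (κ - x - x ^ 2) := by
      apply mul_nonneg <;> nlinarith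
    nlinarith
  refine abs_le.mpr ⟨?_, bound ξ hξ⟩
  have := bound (-ξ) (by rwa [abs_neg])
  linarith

theorem le_one_of_stabilized_step {a m c κ x y g l : ℝ} (ha : 0 < a) (hm : 0 ≤ m)
    (hc : 0 ≤ c) (hl : l ≤ 0) (hy : y ≤ 1) (hg : g ≤ κ) (hκ : 0 ≤ κ)
    (h : (a + κ * m) * x - c * m * l = a * y + m * g) : x ≤ 1 := by
  have hcoef : 0 < a + κ * m := by positivity
  have hdiff : c * m * l ≤ 0 := mul_nonpos_of_nonneg_of_nonpos (mul_nonneg hc hm) hl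
  refine le_of_mul_le_mul_left ?_ hcoef
  calc (a + κ * m) * x = a * y + m * g + c * m * l := by linarith
    _ ≤ a * 1 + m * κ + 0 := by gcongr
    _ = (a + κ * m) * 1 := by ring

theorem stmt_5_general {ι : Type*}
    (M : ℝ → ℝ) (hM : ∀ s, 0 ≤ M s)
    (τ S₁ ε : ℝ) (hτ : 0 < τ) (hS₁ : 2 ≤ S₁)
    (f : ℝ → ℝ) (hf : ∀ ξ, f ξ = ξ - ξ^3)
    (φn φnp : ι → ℝ) (hφn : ∀ i, |φn i| ≤ 1)
    (L : ι → ℝ) (j : ι) (hLj : L j ≤ 0)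
    (hscheme : ∀ i, (1/τ + S₁ * M (φn i)) * φnp i - ε^2 * M (φn i) * L i
      = (1/τ) * φn i + M (φn i) * (f (φn i) + S₁ * φn i)) :
    φnp j ≤ 1 := by
  have hreaction : f (φn j) + S₁ * φn j ≤ S₁ := by
    rw [hf]
    exact (abs_le.mp (abs_sub_pow_three_add_mul_le hS₁ (hφn j))).2
  exact le_one_of_stabilized_step (by positivity) (hM _) (sq_nonneg ε) hLj
    (abs_le.mp (hφn j)).2 hreaction (by linarith) (hscheme j)

theorem stmt_5 {ι : Type*} [Fintype ι] [Nonempty ι]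
    (M : ℝ → ℝ) (hM : ∀ s, 0 ≤ M s)
    (τ S₁ ε : ℝ) (hτ : 0 < τ) (hS₁ : 2 ≤ S₁) (hε : 0 < ε)
    (f : ℝ → ℝ) (hf : ∀ ξ, f ξ = ξ - ξ^3)
    (φn φnp : ι → ℝ) (hφn : ∀ i, |φn i| ≤ 1)
    (L : ι → ℝ) (j : ι) (hj : ∀ i, φnp i ≤ φnp j) (hLj : L j ≤ 0)
    (hscheme : ∀ i, (1/τ + S₁ * M (φn i)) * φnp i - ε^2 * M (φn i) * L i
      = (1/τ) * φn i + M (φn i) * (f (φn i) + S₁ * φn i)) :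
    φnp j ≤ 1 :=
  stmt_5_general M hM τ S₁ ε hτ hS₁ f hf φn φnp hφn L j hLj hscheme
end

section
/- Let M : ℝ → ℝ satisfy M(s) ≥ 0, let τ > 0, S₁ ≥ 2, ε > 0, and let φⁿ, φⁿ⁺¹ : ι → ℝ on a finite nonempty index set with ‖φⁿ‖_∞ ≤ 1. Suppose L : ι → ℝ satisfies L(k) ≥ 0 at an index k where φⁿ⁺¹ attains its minimum, and the scheme equation (1/τ + S₁·M(φⁿ(i)))·φⁿ⁺¹(i) - ε²·M(φⁿ(i))·L(i) = (1/τ)·φⁿ(i) + M(φⁿ(i))·(f(φⁿ(i)) + S₁·φⁿ(i)) holds pointwise, with f(ξ) = ξ - ξ³. Then φⁿ⁺¹(k) ≥ -1. -/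
/-!
On `[-1, 1]` the stabilized reaction term satisfies `f(ξ) + S₁ξ ≥ -S₁`, because
`ξ - ξ³ + S₁ξ + S₁ = (1 + ξ)(S₁ + ξ - ξ²)` with both factors nonnegative when `S₁ ≥ 2`.
At a minimum point the diffusion term `ε² M L` is nonnegative, so the scheme gives
`(1/τ + S₁M)(φⁿ⁺¹ + 1) ≥ (1/τ)(φⁿ + 1) + M (f(φⁿ) + S₁φⁿ + S₁) ≥ 0`.
-/

lemma neg_le_sub_pow_three_add_mul {a S : ℝ} (ha : |a| ≤ 1) (hS : 2 ≤ S) :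
    -S ≤ a - a ^ 3 + S * a := by
  obtain ⟨ha₁, ha₂⟩ := abs_le.mp ha
  have hfactor : a - a ^ 3 + S * a + S = (1 + a) * (S + a - a ^ 2) := by ring
  have hnonneg : 0 ≤ (1 + a) * (S + a - a ^ 2) := by
    apply mul_nonneg <;> nlinarith
  linarith

lemma neg_one_le_of_add_mul_le_mul {c m S a g x : ℝ} (hc : 0 < c) (hm : 0 ≤ m) (hS : 0 ≤ S)
    (ha : -1 ≤ a) (hg : -S ≤ g) (h : c * a + m * g ≤ (c + S * m) * x) : -1 ≤ x := by
  have hcoef : 0 < c + S * m := by positivity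
  have hshift : 0 ≤ (c + S * m) * (x + 1) := by
    nlinarith [mul_nonneg hm (show 0 ≤ g + S by linarith)]
  linarith [(mul_nonneg_iff_of_pos_left hcoef).mp hshift]

theorem stmt_6_general {ι : Type*}
    (M : ℝ → ℝ) (hM : ∀ s, 0 ≤ M s)
    (τ S₁ ε : ℝ) (hτ : 0 < τ) (hS₁ : 2 ≤ S₁)
    (f : ℝ → ℝ) (hf : ∀ ξ, f ξ = ξ - ξ^3)
    (φn φnp : ι → ℝ) (hφn : ∀ i, |φn i| ≤ 1)
    (L : ι → ℝ) (k : ι) (hLk : 0 ≤ L k)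
    (hscheme : ∀ i, (1/τ + S₁ * M (φn i)) * φnp i - ε^2 * M (φn i) * L i
      = (1/τ) * φn i + M (φn i) * (f (φn i) + S₁ * φn i)) :
    -1 ≤ φnp k := by
  have hdiffusion : 0 ≤ ε ^ 2 * M (φn k) * L k := by
    have := hM (φn k)
    positivity
  have hreaction : -S₁ ≤ f (φn k) + S₁ * φn k := by
    have := neg_le_sub_pow_three_add_mul (hφn k) hS₁
    rwa [hf]
  refine neg_one_le_of_add_mul_le_mul (one_div_pos.mpr hτ) (hM (φn k)) (by linarith)
    (abs_le.mp (hφn k)).1 hreaction ?_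
  linarith [hscheme k]

theorem stmt_6 {ι : Type*} [Fintype ι] [Nonempty ι]
    (M : ℝ → ℝ) (hM : ∀ s, 0 ≤ M s)
    (τ S₁ ε : ℝ) (hτ : 0 < τ) (hS₁ : 2 ≤ S₁) (hε : 0 < ε)
    (f : ℝ → ℝ) (hf : ∀ ξ, f ξ = ξ - ξ^3)
    (φn φnp : ι → ℝ) (hφn : ∀ i, |φn i| ≤ 1)
    (L : ι → ℝ) (k : ι) (hk : ∀ i, φnp k ≤ φnp i) (hLk : 0 ≤ L k)
    (hscheme : ∀ i, (1/τ + S₁ * M (φn i)) * φnp i - ε^2 * M (φn i) * L i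
      = (1/τ) * φn i + M (φn i) * (f (φn i) + S₁ * φn i)) :
    -1 ≤ φnp k :=
  stmt_6_general M hM τ S₁ ε hτ hS₁ f hf φn φnp hφn L k hLk hscheme
end

section
/- Let (eⁿ)_{n=0}^{N} be nonnegative reals with e⁰ = 0, e¹ ≤ A, and eⁿ⁺¹ ≤ eⁿ + C·τ_{n+1}·(eⁿ + eⁿ⁻¹ + B) for 1 ≤ n ≤ N-1, where A, B, C ≥ 0 and τₙ > 0 with Σ τₙ = T. Then eⁿ ≤ exp(2CT)·(A + C·T·B) for all 0 ≤ n ≤ N. -/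
/-!
Measure time from the second step, `t n = τ 2 + ⋯ + τ n`. The function
`b t = exp (2 C t) (A + C t B)` is a supersolution of the recursion: one step of length `h`
from two errors bounded by `b t` yields at most `b t (1 + 2 C h) + C h B ≤ b (t + h)`, using
`1 + x ≤ exp x`. By induction all errors up to step `n` are bounded by `b (t n)`, and
`t n ≤ T`.
-/

open Finset

noncomputable def twoStepGronwallBound (A B C t : ℝ) : ℝ :=
  Real.exp (2 * C * t) * (A + C * t * B)

section twoStepGronwallBound

variable {A B C : ℝ}

lemma twoStepGronwallBound_nonneg (hA : 0 ≤ A) (hB : 0 ≤ B) (hC : 0 ≤ C) {t : ℝ}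
    (ht : 0 ≤ t) : 0 ≤ twoStepGronwallBound A B C t := by
  unfold twoStepGronwallBound; positivity

lemma twoStepGronwallBound_step (hA : 0 ≤ A) (hB : 0 ≤ B) (hC : 0 ≤ C) {t h : ℝ}
    (ht : 0 ≤ t) (hh : 0 ≤ h) :
    twoStepGronwallBound A B C t + C * h * (2 * twoStepGronwallBound A B C t + B) ≤
      twoStepGronwallBound A B C (t + h) := by
  have hgrowth : Real.exp (2 * C * t) * (1 + 2 * C * h) ≤ Real.exp (2 * C * (t + h)) := by
    rw [mul_add (2 * C), Real.exp_add]
    gcongr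
    linarith [Real.add_one_le_exp (2 * C * h)]
  have hsource : C * h * B ≤ Real.exp (2 * C * (t + h)) * (C * h * B) :=
    le_mul_of_one_le_left (by positivity) (Real.one_le_exp (by positivity))
  have hstart : 0 ≤ A + C * t * B := by positivity
  unfold twoStepGronwallBound
  linear_combination mul_le_mul_of_nonneg_right hgrowth hstart + hsource

lemma twoStepGronwallBound_mono (hA : 0 ≤ A) (hB : 0 ≤ B) (hC : 0 ≤ C) {s t : ℝ}
    (hs : 0 ≤ s) (hst : s ≤ t) :
    twoStepGronwallBound A B C s ≤ twoStepGronwallBound A B C t := by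
  have hb := twoStepGronwallBound_nonneg hA hB hC hs
  have hCh : 0 ≤ C * (t - s) := mul_nonneg hC (sub_nonneg.mpr hst)
  calc twoStepGronwallBound A B C s
      ≤ twoStepGronwallBound A B C s + C * (t - s) * (2 * twoStepGronwallBound A B C s + B) :=
        le_add_of_nonneg_right (by positivity)
    _ ≤ twoStepGronwallBound A B C (s + (t - s)) :=
        twoStepGronwallBound_step hA hB hC hs (sub_nonneg.mpr hst)
    _ = twoStepGronwallBound A B C t := by rw [add_sub_cancel]

lemma le_twoStepGronwallBound (hA : 0 ≤ A) (hB : 0 ≤ B) (hC : 0 ≤ C) {t : ℝ}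
    (ht : 0 ≤ t) : A ≤ twoStepGronwallBound A B C t := by
  simpa [twoStepGronwallBound] using twoStepGronwallBound_mono hA hB hC le_rfl ht

end twoStepGronwallBound

theorem le_twoStepGronwallBound_of_two_step {N : ℕ} {e t : ℕ → ℝ} {A B C : ℝ}
    (hA : 0 ≤ A) (hB : 0 ≤ B) (hC : 0 ≤ C)
    (ht0 : 0 ≤ t 0) (ht : ∀ n < N, t n ≤ t (n + 1))
    (he0 : e 0 ≤ A) (he1 : e 1 ≤ A)
    (hrec : ∀ n, n + 2 ≤ N →
      e (n + 2) ≤ e (n + 1) + C * (t (n + 2) - t (n + 1)) * (e (n + 1) + e n + B)) :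
    ∀ k ≤ N, e k ≤ twoStepGronwallBound A B C (t N) := by
  have ht_nonneg : ∀ n ≤ N, 0 ≤ t n := by
    intro n hn
    induction n with
    | zero => exact ht0
    | succ n ih => exact (ih (by omega)).trans (ht n (by omega))
  have hmono : ∀ n < N,
      twoStepGronwallBound A B C (t n) ≤ twoStepGronwallBound A B C (t (n + 1)) :=
    fun n hn => twoStepGronwallBound_mono hA hB hC (ht_nonneg n hn.le) (ht n hn)
  suffices ∀ n ≤ N, ∀ k ≤ n, e k ≤ twoStepGronwallBound A B C (t n) from this N le_rfl
  intro n
  induction n with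
  | zero =>
    intro _ k hk
    rw [Nat.le_zero.mp hk]
    exact he0.trans (le_twoStepGronwallBound hA hB hC ht0)
  | succ n ih =>
    intro hn k hk
    have hprev : ∀ j ≤ n, e j ≤ twoStepGronwallBound A B C (t (n + 1)) :=
      fun j hj => (ih (by omega) j hj).trans (hmono n (by omega))
    rcases Nat.lt_or_ge k (n + 1) with hkn | hkn
    · exact hprev k (by omega)
    obtain rfl : k = n + 1 := by omega
    rcases n with _ | m
    · exact he1.trans (le_twoStepGronwallBound hA hB hC (ht_nonneg 1 hn))
    have hb := ih (by omega)
    have hstep := twoStepGronwallBound_step hA hB hC (ht_nonneg (m + 1) (by omega))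
      (sub_nonneg.mpr (ht (m + 1) (by omega)))
    rw [add_sub_cancel] at hstep
    have hCh : 0 ≤ C * (t (m + 2) - t (m + 1)) := mul_nonneg hC (sub_nonneg.mpr (ht _ (by omega)))
    calc e (m + 2)
        ≤ e (m + 1) + C * (t (m + 2) - t (m + 1)) * (e (m + 1) + e m + B) := hrec m hn
      _ ≤ twoStepGronwallBound A B C (t (m + 1)) + C * (t (m + 2) - t (m + 1)) *
            (2 * twoStepGronwallBound A B C (t (m + 1)) + B) := by
          gcongr
          · exact hb _ le_rfl
          · linarith [hb _ le_rfl, hb m (by omega)]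
      _ ≤ twoStepGronwallBound A B C (t (m + 2)) := hstep

theorem stmt_10_general (N : ℕ) (e τ : ℕ → ℝ) (A B C T : ℝ)
    (hA : 0 ≤ A) (hB : 0 ≤ B) (hC : 0 ≤ C)
    (hτ : ∀ n, 1 ≤ n → n ≤ N → 0 < τ n)
    (hT : ∑ k ∈ Finset.Icc 1 N, τ k = T)
    (he0 : e 0 = 0) (he1 : e 1 ≤ A)
    (hrec : ∀ n, 1 ≤ n → n ≤ N - 1 → e (n+1) ≤ e n + C * τ (n+1) * (e n + e (n-1) + B)) :
    ∀ n ≤ N, e n ≤ Real.exp (2 * C * T) * (A + C * T * B) := by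
  set t : ℕ → ℝ := fun n => ∑ k ∈ Ioc 1 n, τ k with ht_def
  have ht_succ : ∀ n, 1 ≤ n → t (n + 1) = t n + τ (n + 1) :=
    fun n hn => sum_Ioc_succ_top hn τ
  have hτ_nonneg : ∀ k ∈ Icc 1 N, 0 ≤ τ k := fun k hk =>
    (hτ k (mem_Icc.mp hk).1 (mem_Icc.mp hk).2).le
  have htN_nonneg : 0 ≤ t N := sum_nonneg fun k hk => hτ_nonneg k (Ioc_subset_Icc_self hk)
  have htN : t N ≤ T := hT ▸ sum_le_sum_of_subset_of_nonneg Ioc_subset_Icc_self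
    fun k hk _ => hτ_nonneg k hk
  have ht_mono : ∀ n < N, t n ≤ t (n + 1) := by
    rintro (_ | n) hn
    · simp [ht_def]
    · rw [ht_succ (n + 1) (by omega)]
      linarith [hτ (n + 2) (by omega) (by omega)]
  have hrec' : ∀ n, n + 2 ≤ N →
      e (n + 2) ≤ e (n + 1) + C * (t (n + 2) - t (n + 1)) * (e (n + 1) + e n + B) := by
    intro n hn
    rw [ht_succ _ (by omega), add_sub_cancel_left]
    simpa only [Nat.add_sub_cancel] using hrec (n + 1) (by omega) (by omega)
  intro n hn
  calc e n ≤ twoStepGronwallBound A B C (t N) :=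
        le_twoStepGronwallBound_of_two_step hA hB hC (by simp [ht_def]) ht_mono (he0 ▸ hA) he1
          hrec' n hn
    _ ≤ twoStepGronwallBound A B C T := twoStepGronwallBound_mono hA hB hC htN_nonneg htN

theorem stmt_10 (N : ℕ) (e τ : ℕ → ℝ) (A B C T : ℝ)
    (hA : 0 ≤ A) (hB : 0 ≤ B) (hC : 0 ≤ C)
    (he : ∀ n ≤ N, 0 ≤ e n) (hτ : ∀ n, 1 ≤ n → n ≤ N → 0 < τ n)
    (hT : ∑ k ∈ Finset.Icc 1 N, τ k = T)
    (he0 : e 0 = 0) (he1 : e 1 ≤ A)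
    (hrec : ∀ n, 1 ≤ n → n ≤ N - 1 → e (n+1) ≤ e n + C * τ (n+1) * (e n + e (n-1) + B)) :
    ∀ n ≤ N, e n ≤ Real.exp (2 * C * T) * (A + C * T * B) :=
  stmt_10_general N e τ A B C T hA hB hC hτ hT he0 he1 hrec
end
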